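/- Let h : (0, ε) → ℝ be differentiable, positive, and satisfy h'(r) = 2 (cos r / sin r) h(r) for all r ∈ (0, ε), and suppose lim_{r→0} r⁻² h(r) = h₀ for some h₀ > 0. Then h(r) = h₀ sin² r for all r ∈ (0, ε). -/

import Mathlib

open Real Set Filter

/-!
The equation says exactly that `h / sin²` has zero derivative wherever `sin ≠ 0`, so on
`(0, min ε π)` the function `h` is a constant multiple of `sin²`. Since
`h r / sin² r = (r / sin r)² · r⁻² h r`, the constant is `h₀`. Finally `ε ≤ π`: otherwise `h`,
being continuous at `π`, would vanish there, contradicting positivity.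
-/

open Topology

lemma hasDerivAt_div_sin_sq_eq_zero {h : ℝ → ℝ} {x : ℝ} (hsin : sin x ≠ 0)
    (hx : HasDerivAt h (2 * (cos x / sin x) * h x) x) :
    HasDerivAt (fun y => h y / sin y ^ 2) 0 x := by
  have hsin_sq : HasDerivAt (fun y => sin y ^ 2) (2 * sin x * cos x) x :=
    ((hasDerivAt_sin x).pow 2).congr_deriv (by ring)
  refine (hx.div hsin_sq (pow_ne_zero 2 hsin)).congr_deriv ?_
  field_simp
  ring

lemma tendsto_div_sin_sq_of_tendsto_div_sq {h : ℝ → ℝ} {c : ℝ}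
    (hlim : Tendsto (fun r => r⁻¹ ^ 2 * h r) (𝓝[>] 0) (𝓝 c)) :
    Tendsto (fun r => h r / sin r ^ 2) (𝓝[>] 0) (𝓝 c) := by
  have hsinc : Tendsto (fun r => (sinc r)⁻¹ ^ 2) (𝓝[>] 0) (𝓝 1) := by
    simpa [sinc_zero] using
      ((continuous_sinc.tendsto 0).inv₀ (by simp [sinc_zero])).pow 2 |>.mono_left
        nhdsWithin_le_nhds
  have hprod : Tendsto (fun r => (sinc r)⁻¹ ^ 2 * (r⁻¹ ^ 2 * h r)) (𝓝[>] 0) (𝓝 c) := by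
    simpa using hsinc.mul hlim
  refine hprod.congr' ?_
  filter_upwards [self_mem_nhdsWithin] with r (hr : 0 < r)
  rw [sinc_of_ne_zero hr.ne']
  field_simp

lemma eqOn_Ioo_of_hasDerivAt_zero_of_tendsto {E : Type*} [NormedAddCommGroup E]
    [NormedSpace ℝ E] {f : ℝ → E} {a b : ℝ} {c : E} (hf : ∀ x ∈ Ioo a b, HasDerivAt f 0 x)
    (hlim : Tendsto f (𝓝[>] a) (𝓝 c)) : EqOn f (fun _ => c) (Ioo a b) := by
  intro x hx
  obtain ⟨d, hd⟩ := isOpen_Ioo.exists_is_const_of_deriv_eq_zero isPreconnected_Ioo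
    (fun y hy => (hf y hy).differentiableAt.differentiableWithinAt)
    (fun y hy => (hf y hy).deriv)
  have hlim_d : Tendsto f (𝓝[>] a) (𝓝 d) :=
    tendsto_const_nhds.congr' <| eventually_of_mem (Ioo_mem_nhdsGT (hx.1.trans hx.2))
      fun y hy => (hd y hy).symm
  rw [hd x hx, tendsto_nhds_unique hlim_d hlim]

lemma eqOn_mul_sin_sq_of_hasDerivAt {h : ℝ → ℝ} {b c : ℝ} (hb : b ≤ π)
    (hdiff : ∀ r ∈ Ioo 0 b, HasDerivAt h (2 * (cos r / sin r) * h r) r)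
    (hlim : Tendsto (fun r => r⁻¹ ^ 2 * h r) (𝓝[>] 0) (𝓝 c)) :
    EqOn h (fun r => c * sin r ^ 2) (Ioo 0 b) := by
  have hsin : ∀ r ∈ Ioo 0 b, sin r ≠ 0 := fun r hr =>
    (sin_pos_of_pos_of_lt_pi hr.1 (hr.2.trans_le hb)).ne'
  have hconst := eqOn_Ioo_of_hasDerivAt_zero_of_tendsto
    (fun r hr => hasDerivAt_div_sin_sq_eq_zero (hsin r hr) (hdiff r hr))
    (tendsto_div_sin_sq_of_tendsto_div_sq hlim)
  exact fun r hr => (div_eq_iff (pow_ne_zero 2 (hsin r hr))).1 (hconst hr)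

lemma le_pi_of_hasDerivAt_of_pos {h : ℝ → ℝ} {ε c : ℝ}
    (hdiff : ∀ r ∈ Ioo 0 ε, HasDerivAt h (2 * (cos r / sin r) * h r) r)
    (hpos : ∀ r ∈ Ioo 0 ε, 0 < h r)
    (hlim : Tendsto (fun r => r⁻¹ ^ 2 * h r) (𝓝[>] 0) (𝓝 c)) : ε ≤ π := by
  by_contra! hπε
  have hπ : π ∈ Ioo 0 ε := ⟨pi_pos, hπε⟩
  have hsin_sq := eqOn_mul_sin_sq_of_hasDerivAt le_rfl
    (fun r hr => hdiff r ⟨hr.1, hr.2.trans hπε⟩) hlim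
  have hleft : Tendsto h (𝓝[<] π) (𝓝 (c * sin π ^ 2)) :=
    ((continuous_const.mul (continuous_sin.pow 2)).tendsto π |>.mono_left
      nhdsWithin_le_nhds).congr' <|
      eventually_of_mem (Ioo_mem_nhdsLT pi_pos) fun r hr => (hsin_sq hr).symm
  have hzero : h π = 0 := by
    simpa using tendsto_nhds_unique
      ((hdiff π hπ).continuousAt.continuousWithinAt.tendsto) hleft
  exact (hpos π hπ).ne' hzero

theorem stmt_2_general (ε h₀ : ℝ) (h : ℝ → ℝ)
    (hdiff : ∀ r ∈ Ioo 0 ε, HasDerivAt h (2 * (Real.cos r / Real.sin r) * h r) r)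
    (hpos : ∀ r ∈ Ioo 0 ε, 0 < h r)
    (hlim : Tendsto (fun r : ℝ => r⁻¹ ^ 2 * h r) (nhdsWithin 0 (Ioi 0)) (nhds h₀)) :
    ∀ r ∈ Ioo 0 ε, h r = h₀ * Real.sin r ^ 2 :=
  eqOn_mul_sin_sq_of_hasDerivAt (le_pi_of_hasDerivAt_of_pos hdiff hpos hlim) hdiff hlim

/-- If `h` is differentiable and positive on `(0,ε)` with
`h' r = 2 (cos r / sin r) h r`, and `r⁻² h r → h₀ > 0` as `r → 0⁺`, then
`h r = h₀ sin² r` on `(0,ε)`. -/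
theorem stmt_2 (ε h₀ : ℝ) (hε : 0 < ε) (hh₀ : 0 < h₀) (h : ℝ → ℝ)
    (hdiff : ∀ r ∈ Ioo 0 ε, HasDerivAt h (2 * (Real.cos r / Real.sin r) * h r) r)
    (hpos : ∀ r ∈ Ioo 0 ε, 0 < h r)
    (hlim : Tendsto (fun r : ℝ => r⁻¹ ^ 2 * h r) (nhdsWithin 0 (Ioi 0)) (nhds h₀)) :
    ∀ r ∈ Ioo 0 ε, h r = h₀ * Real.sin r ^ 2 :=
  stmt_2_general ε h₀ h hdiff hpos hlim
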